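/- arXiv:1701.08652 — 2 statements merged into one kernel-verified Lean document; each statement's English description precedes it below -/
import Mathlib

section
/- If a preference profile contains a δ-subprofile, i.e., two pairs of alternatives {a,b}, {c,d} and four voters i, j, k, ℓ with: a ≻_i b and c ≻_i d; b ≻_j a and c ≻_j d; a ≻_k b and d ≻_k c; b ≻_ℓ a and d ≻_ℓ c, then the profile is not single-crossing. -/
/-- Voter with ranking equiv `p` (alternative ↦ position) prefers `a` to `b`. -/
def prefers {n : ℕ} (p : Fin n ≃ Fin n) (a b : Fin n) : Prop :=
  p a < p b

/-- A profile is narcissistic if every voter ranks herself first. -/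
def Narcissistic {n : ℕ} (P : Fin n → Fin n ≃ Fin n) : Prop :=
  ∀ i a, a ≠ i → prefers (P i) i a

/-- Single-peakedness of a profile with respect to a strict order `lt` on alternatives:
for every voter `i` with peak `c` (the alternative ranked first by `i`),
if `lt a b ∧ lt b c` or `lt c b ∧ lt b a` then voter `i` prefers `b` to `a`. -/
def SinglePeakedWrt {m n : ℕ} (P : Fin m → Fin n ≃ Fin n)
    (lt : Fin n → Fin n → Prop) : Prop :=
  ∀ (i : Fin m) (c a b : Fin n), (∀ x, x ≠ c → prefers (P i) c x) →
    ((lt a b ∧ lt b c) ∨ (lt c b ∧ lt b a)) → prefers (P i) b a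

/-- Single-crossingness of a profile with respect to a strict order `lt` on voters. -/
def SingleCrossingWrt {m n : ℕ} (P : Fin m → Fin n ≃ Fin n)
    (lt : Fin m → Fin m → Prop) : Prop :=
  ∀ (a b : Fin n) (i j k : Fin m), lt i j → lt j k →
    prefers (P i) a b → prefers (P k) a b → prefers (P j) a b

/-- `T` is a semi-standard Young tableau of (staircase) order `n`:
the valid cells are the `(i, j)` (0-indexed) with `i + j < n` (so row `i` has `n - i`
entries, entries being elements of `Fin n`, i.e. of `{1,…,n}`), entries weakly increase
along rows and strictly increase down columns; entries outside the staircase are `0`. -/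
def IsSSYT (n : ℕ) (T : Fin n → Fin n → Fin n) : Prop :=
  (∀ i j j' : Fin n, j ≤ j' → (i : ℕ) + (j' : ℕ) < n → T i j ≤ T i j') ∧
  (∀ i i' j : Fin n, i < i' → (i' : ℕ) + (j : ℕ) < n → T i j < T i' j) ∧
  (∀ i j : Fin n, n ≤ (i : ℕ) + (j : ℕ) → (T i j : ℕ) = 0)

/-! For a fixed pair `{x, y}`, single-crossingness makes both the voters preferring `x` to `y`
and those preferring `y` to `x` intervals of the voter order, so each pair of alternatives cuts
the voter line into two pieces. The δ-subprofile would need the cut `{i, k} | {j, l}` for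
`{a, b}` and the cut `{i, j} | {k, l}` for `{c, d}`, and no linear order of four voters has both. -/

theorem prefers.asymm {n : ℕ} {p : Fin n ≃ Fin n} {x y : Fin n} (h : prefers p x y) :
    ¬ prefers p y x :=
  lt_asymm h

theorem ne_of_prefers_of_prefers {m n : ℕ} {P : Fin m → Fin n ≃ Fin n} {u v : Fin m}
    {x y : Fin n} (hu : prefers (P u) x y) (hv : prefers (P v) y x) : u ≠ v := by
  rintro rfl
  exact hu.asymm hv

section SingleCrossing

variable {m n : ℕ} {P : Fin m → Fin n ≃ Fin n} {α : Type*} [LinearOrder α] {f : Fin m → α}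

theorem SingleCrossingWrt.lt_of_lt_of_disagree (hsc : SingleCrossingWrt P (fun u v => f u < f v))
    (hf : Function.Injective f) {x y : Fin n} {u v w t : Fin m}
    (hu : prefers (P u) x y) (hw : prefers (P w) x y)
    (hv : prefers (P v) y x) (ht : prefers (P t) y x) (huv : f u < f v) : f w < f t := by
  by_contra! htw
  have htw : f t < f w := htw.lt_of_ne (hf.ne (ne_of_prefers_of_prefers ht hw))
  rcases (hf.ne (ne_of_prefers_of_prefers hw hv)).lt_or_gt with hwv | hvw
  · exact hw.asymm (hsc y x t w v htw hwv ht hv)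
  · exact hv.asymm (hsc x y u v w huv hvw hu hw)

theorem SingleCrossingWrt.not_lt_of_delta (hsc : SingleCrossingWrt P (fun u v => f u < f v))
    (hf : Function.Injective f) {a b c d : Fin n} {i j k l : Fin m}
    (hi : prefers (P i) a b ∧ prefers (P i) c d)
    (hj : prefers (P j) b a ∧ prefers (P j) c d)
    (hk : prefers (P k) a b ∧ prefers (P k) d c)
    (hl : prefers (P l) b a ∧ prefers (P l) d c) : ¬ f i < f j := by
  intro hij
  have hil : f i < f l := hsc.lt_of_lt_of_disagree hf hi.1 hi.1 hj.1 hl.1 hij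
  have hkj : f k < f j := hsc.lt_of_lt_of_disagree hf hi.1 hk.1 hj.1 hj.1 hij
  have hjk : f j < f k := hsc.lt_of_lt_of_disagree hf hi.2 hj.2 hl.2 hk.2 hil
  exact lt_asymm hjk hkj

end SingleCrossing

theorem delta_subprofile_not_sc_general (m n : ℕ) (P : Fin m → Fin n ≃ Fin n)
    (a b c d : Fin n) (i j k l : Fin m)
    (hi : prefers (P i) a b ∧ prefers (P i) c d)
    (hj : prefers (P j) b a ∧ prefers (P j) c d)
    (hk : prefers (P k) a b ∧ prefers (P k) d c)
    (hl : prefers (P l) b a ∧ prefers (P l) d c) :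
    ¬ ∃ σ : Fin m ≃ Fin m, SingleCrossingWrt P (fun x y => σ x < σ y) := by
  rintro ⟨σ, hsc⟩
  have hij : σ i ≠ σ j := σ.injective.ne (ne_of_prefers_of_prefers hi.1 hj.1)
  rcases hij.lt_or_gt with hij | hji
  · exact hsc.not_lt_of_delta σ.injective hi hj hk hl hij
  · exact hsc.not_lt_of_delta σ.injective hj hi hl hk hji

/-- A profile containing a `δ`-subprofile (two pairs of alternatives `{a,b}`, `{c,d}`
and four voters `i, j, k, ℓ` with `a ≻ᵢ b`, `c ≻ᵢ d`; `b ≻ⱼ a`, `c ≻ⱼ d`; `a ≻ₖ b`,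
`d ≻ₖ c`; `b ≻ₗ a`, `d ≻ₗ c`) is not single-crossing. -/
theorem delta_subprofile_not_sc (m n : ℕ) (P : Fin m → Fin n ≃ Fin n)
    (a b c d : Fin n) (i j k l : Fin m)
    (hab : a ≠ b) (hcd : c ≠ d)
    (hi : prefers (P i) a b ∧ prefers (P i) c d)
    (hj : prefers (P j) b a ∧ prefers (P j) c d)
    (hk : prefers (P k) a b ∧ prefers (P k) d c)
    (hl : prefers (P l) b a ∧ prefers (P l) d c) :
    ¬ ∃ σ : Fin m ≃ Fin m, SingleCrossingWrt P (fun x y => σ x < σ y) :=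
  delta_subprofile_not_sc_general m n P a b c d i j k l hi hj hk hl
end

section
/- Let P be a narcissistic profile on {1,...,n} in which voter 1's order is 1 ≻ 2 ≻ ... ≻ n and voter n's order is the reverse, and which is single-crossing with respect to the voter order 1 ▷ 2 ▷ ... ▷ n. Then for each alternative a with 1 ≤ a ≤ n-1, the position of a in the preference orders of voters a+1, a+2, ..., n is non-decreasing (where the position of x in ≻ is one plus the number of alternatives strictly preferred to x). -/
/-! An alternative `b` that voter `v` prefers to `a` is still preferred to `a` by every later
voter `w`. If `a < b`, the last voter prefers `b` to `a`, so single-crossing between `v` and the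
last voter forces `w` to agree. If `b < a`, voter `a` ranks herself above `b`; were `w` to do the
same, single-crossing between `a` and `w` would force `v` to as well. Hence the set of alternatives
ranked above `a` can only grow, and the position of `a` is its cardinality. -/

instance instDecidablePrefers {n : ℕ} (p : Fin n ≃ Fin n) (a b : Fin n) :
    Decidable (prefers p a b) :=
  inferInstanceAs (Decidable (p a < p b))

section Preference

variable {n : ℕ} (p : Fin n ≃ Fin n)

theorem prefers_asymm {a b : Fin n} (h : prefers p a b) : ¬ prefers p b a :=
  lt_asymm h

theorem prefers_of_not_prefers {a b : Fin n} (hab : a ≠ b) (h : ¬ prefers p a b) :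
    prefers p b a :=
  lt_of_le_of_ne (not_lt.mp h) fun he => hab (p.injective he).symm

open Finset in
theorem card_filter_prefers (a : Fin n) :
    #{b | prefers p b a} = (p a : ℕ) := by
  have h : univ.filter (prefers p · a) = (Iio (p a)).map p.symm.toEmbedding := by
    ext b
    rw [mem_filter, mem_map_equiv]
    simp [prefers]
  rw [h, card_map, Fin.card_Iio]

theorem apply_le_apply_of_prefers_imp {q : Fin n ≃ Fin n} {a : Fin n}
    (h : ∀ b, prefers p b a → prefers q b a) : p a ≤ q a := by
  rw [Fin.le_def, ← card_filter_prefers p, ← card_filter_prefers q]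
  exact Finset.card_le_card fun b hb => by simp_all

end Preference

theorem SingleCrossingWrt.prefers_of_le_of_le {m n : ℕ} {P : Fin m → Fin n ≃ Fin n}
    (hsc : SingleCrossingWrt P (· < ·)) {a b : Fin n} {i j k : Fin m} (hij : i ≤ j) (hjk : j ≤ k)
    (hi : prefers (P i) a b) (hk : prefers (P k) a b) : prefers (P j) a b := by
  rcases hij.eq_or_lt with rfl | hij
  · exact hi
  rcases hjk.eq_or_lt with rfl | hjk
  · exact hk
  exact hsc a b i j k hij hjk hi hk

theorem prefers_of_prefers_of_le {n : ℕ} {P : Fin n → Fin n ≃ Fin n}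
    (hnar : Narcissistic P)
    (hlast : ∀ v a b : Fin n, (v : ℕ) = n - 1 → a < b → prefers (P v) b a)
    (hsc : SingleCrossingWrt P (· < ·)) {a b v w : Fin n} (hav : a ≤ v) (hvw : v ≤ w)
    (hv : prefers (P v) b a) : prefers (P w) b a := by
  rcases lt_trichotomy a b with hab | rfl | hba
  · let last : Fin n := ⟨n - 1, by omega⟩
    have hw_last : w ≤ last := Fin.le_def.mpr (by change (w : ℕ) ≤ n - 1; omega)
    exact hsc.prefers_of_le_of_le hvw hw_last hv (hlast last a b rfl hab)
  · exact absurd hv (lt_irrefl _)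
  · by_contra hw
    have hw' : prefers (P w) a b := prefers_of_not_prefers _ hba.ne hw
    have ha : prefers (P a) a b := hnar a b hba.ne
    exact prefers_asymm _ hv (hsc.prefers_of_le_of_le hav hvw ha hw')

theorem scn_positions_nondecreasing_general (n : ℕ)
    (P : Fin n → Fin n ≃ Fin n)
    (hnar : Narcissistic P)
    (hlast : ∀ v a b : Fin n, (v : ℕ) = n - 1 → a < b → prefers (P v) b a)
    (hsc : SingleCrossingWrt P (· < ·)) :
    ∀ a v w : Fin n, (a : ℕ) < n - 1 → a < v → v ≤ w →
      ((P v) a : ℕ) + 1 ≤ ((P w) a : ℕ) + 1 := by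
  intro a v w _ hav hvw
  have hle : P v a ≤ P w a := apply_le_apply_of_prefers_imp _ fun _ =>
    prefers_of_prefers_of_le hnar hlast hsc hav.le hvw
  exact Nat.add_le_add_right hle 1

/-- Let `P` be a narcissistic profile on `{0, …, n-1}` in which the first voter's order
is `0 ≻ 1 ≻ ⋯ ≻ n-1`, the last voter's order is the reverse, and which is
single-crossing with respect to the natural voter order. Then for each alternative `a`
other than the last one, the position of `a` (one plus the number of alternatives
strictly preferred to `a`, here `(P v a : ℕ) + 1`) in the preference orders of the
voters `a+1, a+2, …, n-1` is non-decreasing. -/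
theorem scn_positions_nondecreasing (n : ℕ) (hn : 2 ≤ n)
    (P : Fin n → Fin n ≃ Fin n)
    (hnar : Narcissistic P)
    (h0 : ∀ v a b : Fin n, (v : ℕ) = 0 → a < b → prefers (P v) a b)
    (hlast : ∀ v a b : Fin n, (v : ℕ) = n - 1 → a < b → prefers (P v) b a)
    (hsc : SingleCrossingWrt P (· < ·)) :
    ∀ a v w : Fin n, (a : ℕ) < n - 1 → a < v → v ≤ w →
      ((P v) a : ℕ) + 1 ≤ ((P w) a : ℕ) + 1 :=
  scn_positions_nondecreasing_general n P hnar hlast hsc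
end
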